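/- The Heawood graph contains exactly 42 unordered pairs of vertex-disjoint six-cycles; that is, the set of unordered pairs {A, B} of subgraphs of the Heawood graph, each isomorphic to the cycle graph on 6 vertices and having disjoint vertex sets, has cardinality 42. -/

import Mathlib

instance : DecidablePred (Even : ZMod 14 → Prop) :=
  fun i => decidable_of_iff (∃ r, i = r + r) Iff.rfl

instance : DecidablePred (Odd : ZMod 14 → Prop) :=
  fun i => decidable_of_iff (∃ r, i = 2 * r + 1) Iff.rfl

/-- The Heawood graph: the simple graph on vertex set `ZMod 14` in which distinct vertices
`i` and `j` are adjacent iff `j = i + 1`, or `j = i - 1`, or (`i` is even and `j = i + 5`),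
or (`i` is odd and `j = i - 5`). -/
def heawood : SimpleGraph (ZMod 14) where
  Adj i j := i ≠ j ∧ (j = i + 1 ∨ j = i - 1 ∨ (Even i ∧ j = i + 5) ∨ (Odd i ∧ j = i - 5))
  symm := ⟨by intro i j; revert i j; decide⟩
  loopless := ⟨by intro i; revert i; decide⟩

/-- An `n`-cycle of a simple graph `G` is a subgraph of `G` isomorphic to the cycle graph
on `n` vertices. -/
def IsNCycle {V : Type*} {G : SimpleGraph V} (n : ℕ) (C : G.Subgraph) : Prop :=
  Nonempty (C.coe ≃g SimpleGraph.cycleGraph n)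



set_option maxRecDepth 8000
set_option synthInstance.maxSize 2000
set_option synthInstance.maxHeartbeats 1000000
set_option maxHeartbeats 16000000


instance : DecidableRel heawood.Adj := fun i j => by unfold heawood; infer_instance

def vF (a : Fin 6 → ZMod 14) : Finset (ZMod 14) := Finset.univ.image a

def eF (a : Fin 6 → ZMod 14) : Finset (Sym2 (ZMod 14)) :=
  Finset.univ.image (fun i => s(a i, a (i + 1)))

lemma mem_eF {a : Fin 6 → ZMod 14} {x y : ZMod 14} :
    s(x, y) ∈ eF a ↔ ∃ i, (a i = x ∧ a (i+1) = y) ∨ (a i = y ∧ a (i+1) = x) := by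
  simp [eF, Sym2.eq_iff]

def mkC (a : Fin 6 → ZMod 14) : heawood.Subgraph where
  verts := Set.range a
  Adj x y := heawood.Adj x y ∧ s(x, y) ∈ eF a
  adj_sub h := h.1
  edge_vert := by
    rintro v w ⟨-, h⟩
    obtain ⟨i, hi⟩ := mem_eF.mp h
    rcases hi with ⟨h1, -⟩ | ⟨-, h2⟩
    · exact ⟨i, h1⟩
    · exact ⟨i + 1, h2⟩
  symm := ⟨by
    rintro v w ⟨h1, h2⟩
    refine ⟨h1.symm, ?_⟩
    rwa [Sym2.eq_swap]⟩

lemma verts_mkC (a : Fin 6 → ZMod 14) : (mkC a).verts = ↑(vF a) := by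
  simp [mkC, vF]

lemma adj_mkC (a : Fin 6 → ZMod 14) {x y : ZMod 14} :
    (mkC a).Adj x y ↔ heawood.Adj x y ∧ s(x, y) ∈ eF a := Iff.rfl

lemma mkC_congr {a b : Fin 6 → ZMod 14} (h1 : vF a = vF b) (h2 : eF a = eF b) :
    mkC a = mkC b := by
  refine SimpleGraph.Subgraph.ext ?_ ?_
  · rw [show (mkC a).verts = ↑(vF a) from verts_mkC a, h1, ← verts_mkC b]
  · funext x y
    show (heawood.Adj x y ∧ s(x, y) ∈ eF a) = (heawood.Adj x y ∧ s(x, y) ∈ eF b)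
    rw [h2]

lemma cyc_adj : ∀ i j : Fin 6, (SimpleGraph.cycleGraph 6).Adj i j ↔ (j = i + 1 ∨ i = j + 1) := by
  decide

lemma isNCycle_mkC {a : Fin 6 → ZMod 14} (hinj : Function.Injective a)
    (hadj : ∀ i, heawood.Adj (a i) (a (i+1))) : IsNCycle 6 (mkC a) := by
  have hmem : ∀ i : Fin 6, a i ∈ (mkC a).verts := fun i => ⟨i, rfl⟩
  let g : Fin 6 ≃ (mkC a).verts :=
    Equiv.ofBijective (fun i => ⟨a i, hmem i⟩)
      ⟨fun i j h => hinj (congrArg Subtype.val h), by rintro ⟨v, i, rfl⟩; exact ⟨i, rfl⟩⟩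
  have key : ∀ i j : Fin 6, (mkC a).coe.Adj (g i) (g j) ↔ (SimpleGraph.cycleGraph 6).Adj i j := by
    intro i j
    rw [cyc_adj]
    show ((mkC a).Adj (a i) (a j)) ↔ _
    rw [adj_mkC]
    constructor
    · rintro ⟨-, hm⟩
      obtain ⟨k, hk⟩ := mem_eF.mp hm
      rcases hk with ⟨h1, h2⟩ | ⟨h1, h2⟩
      · left; rw [← hinj h1, hinj h2]
      · right; rw [← hinj h2, hinj h1]
    · rintro (rfl | rfl)
      · exact ⟨hadj i, mem_eF.mpr ⟨i, Or.inl ⟨rfl, rfl⟩⟩⟩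
      · exact ⟨(hadj j).symm, mem_eF.mpr ⟨j, Or.inr ⟨rfl, rfl⟩⟩⟩
  exact ⟨(SimpleGraph.Iso.symm { toEquiv := g, map_rel_iff' := @fun i j => key i j })⟩

lemma cyc_succ : ∀ i : Fin 6, (SimpleGraph.cycleGraph 6).Adj i (i + 1) := by decide

lemma exists_tuple {C : heawood.Subgraph} (h : IsNCycle 6 C) :
    ∃ a : Fin 6 → ZMod 14, Function.Injective a ∧
      (∀ i, heawood.Adj (a i) (a (i+1))) ∧ C = mkC a := by
  obtain ⟨φ⟩ := h
  let ψ := φ.symm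
  set a : Fin 6 → ZMod 14 := fun i => ((ψ i : C.verts) : ZMod 14) with ha
  have hval : ∀ u : C.verts, a (φ u) = (u : ZMod 14) := by
    intro u
    show ((ψ (φ u) : C.verts) : ZMod 14) = _
    have : ψ (φ u) = u := φ.toEquiv.symm_apply_apply u
    rw [this]
  have hinj : Function.Injective a :=
    fun i j hij => ψ.toEquiv.injective (Subtype.ext hij)
  have hCadj : ∀ i : Fin 6, C.Adj (a i) (a (i+1)) := by
    intro i
    have h1 : C.coe.Adj (ψ i) (ψ (i+1)) := ψ.map_rel_iff.mpr (cyc_succ i)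
    exact h1
  refine ⟨a, hinj, fun i => C.adj_sub (hCadj i), ?_⟩
  refine SimpleGraph.Subgraph.ext ?_ ?_
  · apply Set.Subset.antisymm
    · intro v hv
      exact ⟨φ ⟨v, hv⟩, hval ⟨v, hv⟩⟩
    · rintro v ⟨i, rfl⟩
      exact (ψ i).2
  · funext x y
    apply propext
    constructor
    · intro hxy
      have hx : x ∈ C.verts := hxy.fst_mem
      have hy : y ∈ C.verts := hxy.snd_mem
      have hcoe : C.coe.Adj ⟨x, hx⟩ ⟨y, hy⟩ := hxy
      have hcg : (SimpleGraph.cycleGraph 6).Adj (φ ⟨x, hx⟩) (φ ⟨y, hy⟩) :=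
        φ.map_rel_iff.mpr hcoe
      have hax : a (φ ⟨x, hx⟩) = x := hval _
      have hay : a (φ ⟨y, hy⟩) = y := hval _
      rcases (cyc_adj _ _).mp hcg with h1 | h1
      · exact ⟨C.adj_sub hxy, mem_eF.mpr ⟨φ ⟨x, hx⟩, Or.inl ⟨hax, by rw [← h1, hay]⟩⟩⟩
      · exact ⟨C.adj_sub hxy, mem_eF.mpr ⟨φ ⟨y, hy⟩, Or.inr ⟨hay, by rw [← h1, hax]⟩⟩⟩
    · rintro ⟨-, he⟩
      obtain ⟨i, hi⟩ := mem_eF.mp he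
      rcases hi with ⟨h1, h2⟩ | ⟨h1, h2⟩
      · rw [← h1, ← h2]; exact hCadj i
      · rw [← h1, ← h2]; exact (hCadj i).symm


def t : Fin 28 → Fin 6 → ZMod 14 := ![![0,1,2,3,4,5], ![0,1,2,3,12,13], ![0,1,2,7,6,5], ![0,1,2,7,8,13], ![0,1,10,9,4,5], ![0,1,10,9,8,13], ![0,1,10,11,6,5], ![0,1,10,11,12,13], ![0,5,4,3,12,13], ![0,5,4,9,8,13], ![0,5,6,7,8,13], ![0,5,6,11,12,13], ![1,2,3,4,9,10], ![1,2,3,12,11,10], ![1,2,7,6,11,10], ![1,2,7,8,9,10], ![2,3,4,5,6,7], ![2,3,4,9,8,7], ![2,3,12,11,6,7], ![2,3,12,13,8,7], ![3,4,5,6,11,12], ![3,4,9,8,13,12], ![3,4,9,10,11,12], ![4,5,6,7,8,9], ![4,5,6,11,10,9], ![6,7,8,9,10,11], ![6,7,8,13,12,11], ![8,9,10,11,12,13]]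
def p1 : Fin 42 → Fin 28 := ![0,0,0,1,1,1,2,2,2,3,3,3,4,4,4,5,5,5,6,6,6,7,7,7,8,8,8,9,9,9,10,10,10,11,11,11,12,13,14,15,16,19]
def p2 : Fin 42 → Fin 28 := ![25,26,27,23,24,25,21,22,27,20,22,24,18,19,26,16,18,20,17,19,21,16,17,23,14,15,25,13,14,18,12,13,22,12,15,17,26,23,21,20,27,24]

theorem t_inj : ∀ k : Fin 28, Function.Injective (t k) := by decide
theorem t_adj : ∀ k : Fin 28, ∀ i : Fin 6, heawood.Adj (t k i) (t k (i+1)) := by decide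
theorem t_disj : ∀ k : Fin 42, Disjoint (vF (t (p1 k))) (vF (t (p2 k))) := by decide
theorem pair_inj : ∀ i j : Fin 42,
    ((vF (t (p1 i)) = vF (t (p1 j)) ∨ vF (t (p1 i)) = vF (t (p2 j))) ∧
     (vF (t (p2 i)) = vF (t (p1 j)) ∨ vF (t (p2 i)) = vF (t (p2 j)))) → i = j := by decide
theorem pair_complete : ∀ i j : Fin 28, Disjoint (vF (t i)) (vF (t j)) →
    ∃ k : Fin 42, (p1 k = i ∧ p2 k = j) ∨ (p1 k = j ∧ p2 k = i) := by decide
theorem tuple_complete : ∀ a0 a1 : ZMod 14, heawood.Adj a0 a1 →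
    ∀ a2, heawood.Adj a1 a2 → a2 ≠ a0 →
    ∀ a3, heawood.Adj a2 a3 → a3 ≠ a0 → a3 ≠ a1 →
    ∀ a4, heawood.Adj a3 a4 → a4 ≠ a0 → a4 ≠ a1 → a4 ≠ a2 →
    ∀ a5, heawood.Adj a4 a5 → heawood.Adj a5 a0 → a5 ≠ a1 → a5 ≠ a2 → a5 ≠ a3 →
    ∃ k : Fin 28, vF ![a0,a1,a2,a3,a4,a5] = vF (t k) ∧ eF ![a0,a1,a2,a3,a4,a5] = eF (t k) := by
  decide

/-- The Heawood graph contains exactly `42` unordered pairs `{A, B}` of vertex-disjoint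
`6`-cycles. -/
theorem heawood_count_disjoint_six_cycle_pairs :
    Nat.card {S : Set heawood.Subgraph //
      ∃ A B : heawood.Subgraph, A ≠ B ∧ S = {A, B} ∧ IsNCycle 6 A ∧ IsNCycle 6 B ∧
        Disjoint A.verts B.verts} = 42 := by
  have key : ∀ (A : heawood.Subgraph), IsNCycle 6 A → ∃ k : Fin 28, A = mkC (t k) := by
    intro A hA
    obtain ⟨a, hinj, hadj, rfl⟩ := exists_tuple hA
    have h6 : ![a 0, a 1, a 2, a 3, a 4, a 5] = a := by funext i; fin_cases i <;> rfl
    have hne : ∀ i j : Fin 6, i ≠ j → a i ≠ a j := fun i j hij h => hij (hinj h)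
    obtain ⟨k, hv, he⟩ := tuple_complete (a 0) (a 1) (hadj 0)
      (a 2) (hadj 1) (hne 2 0 (by decide))
      (a 3) (hadj 2) (hne 3 0 (by decide)) (hne 3 1 (by decide))
      (a 4) (hadj 3) (hne 4 0 (by decide)) (hne 4 1 (by decide)) (hne 4 2 (by decide))
      (a 5) (hadj 4) (hadj 5) (hne 5 1 (by decide)) (hne 5 2 (by decide)) (hne 5 3 (by decide))
    rw [h6] at hv he
    exact ⟨k, mkC_congr hv he⟩
  have hVmk : ∀ (x y : Fin 6 → ZMod 14), mkC x = mkC y → vF x = vF y := by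
    intro x y h
    apply Finset.coe_injective
    rw [← verts_mkC, ← verts_mkC, h]
  set A := fun k : Fin 42 => mkC (t (p1 k)) with hAdef
  set B := fun k : Fin 42 => mkC (t (p2 k)) with hBdef
  have hdisjk : ∀ k, Disjoint (A k).verts (B k).verts := by
    intro k; rw [hAdef, hBdef]
    simp only [verts_mkC]
    exact Finset.disjoint_coe.mpr (t_disj k)
  have hABne : ∀ k, A k ≠ B k := by
    intro k h
    have hd := hdisjk k
    rw [← h] at hd
    have hm : t (p1 k) 0 ∈ (A k).verts := ⟨0, rfl⟩
    exact absurd (Set.disjoint_iff.mp hd ⟨hm, hm⟩) (Set.notMem_empty _)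
  have hPk : ∀ k : Fin 42,
      ∃ A' B' : heawood.Subgraph, A' ≠ B' ∧ ({A k, B k} : Set heawood.Subgraph) = {A', B'} ∧
        IsNCycle 6 A' ∧ IsNCycle 6 B' ∧ Disjoint A'.verts B'.verts := fun k =>
    ⟨A k, B k, hABne k, rfl, isNCycle_mkC (t_inj (p1 k)) (t_adj (p1 k)),
      isNCycle_mkC (t_inj (p2 k)) (t_adj (p2 k)), hdisjk k⟩
  let f : Fin 42 → {S : Set heawood.Subgraph //
      ∃ A B : heawood.Subgraph, A ≠ B ∧ S = {A, B} ∧ IsNCycle 6 A ∧ IsNCycle 6 B ∧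
        Disjoint A.verts B.verts} := fun k => ⟨{A k, B k}, hPk k⟩
  have hbij : Function.Bijective f := by
    constructor
    · intro i j hij
      have hs : ({A i, B i} : Set heawood.Subgraph) = {A j, B j} :=
        congrArg Subtype.val hij
      have h1 : A i = A j ∨ A i = B j := by
        have hm : A i ∈ ({A j, B j} : Set heawood.Subgraph) := hs ▸ Set.mem_insert _ _
        simpa using hm
      have h2 : B i = A j ∨ B i = B j := by
        have hm : B i ∈ ({A j, B j} : Set heawood.Subgraph) :=
          hs ▸ Set.mem_insert_iff.mpr (Or.inr rfl)
        simpa using hm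
      exact pair_inj i j ⟨h1.imp (hVmk _ _) (hVmk _ _), h2.imp (hVmk _ _) (hVmk _ _)⟩
    · rintro ⟨S, A', B', hne, rfl, hA', hB', hd⟩
      obtain ⟨k1, rfl⟩ := key A' hA'
      obtain ⟨k2, rfl⟩ := key B' hB'
      have hd' : Disjoint (vF (t k1)) (vF (t k2)) := by
        rw [verts_mkC, verts_mkC] at hd
        exact Finset.disjoint_coe.mp hd
      obtain ⟨k, hk | hk⟩ := pair_complete k1 k2 hd'
      · exact ⟨k, Subtype.ext (by simp only [f, hAdef, hBdef, hk.1, hk.2])⟩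
      · refine ⟨k, Subtype.ext ?_⟩
        simp only [f, hAdef, hBdef, hk.1, hk.2]
        exact Set.pair_comm _ _
  have hc := Nat.card_congr (Equiv.ofBijective f hbij)
  rw [← hc]
  simp
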